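/- Let 0 < C < 1 and 0 < η < 1. Then 2·∫₀^η √(C² + 2t − 3C²t) / ( (1−t)(1 + t − 2C²t)·√(2t) ) dt = 2·( (1/√(1−C²))·artanh √( 2η(1−C²) / (C² + 2η − 3C²η) ) − artanh √( 2η(1−C²)² / (C² + 2η − 3C²η) ) ). (The left-hand side is the hyperbolic arc length of the boundary arc ∂^∪E^C_η of the h-elliptic parabola x²/C² + 2y² − 2y = 0 with y ≤ η, computed via the BCK arc length element.) -/

import Mathlib

/-!
The integral has an explicit primitive. For `g(t) = a t / (q + r t)` one computes
`d/dt artanh √g = q √a / (2 √t √(q + r t) (q + (r - a) t))`. With `q + r t = C² + 2t - 3C²t`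
and `a = 2(1 - C²)` resp. `a = 2(1 - C²)²`, the last factor becomes `C²(1 - t)`
resp. `C²(1 + t - 2C²t)`, and the partial fraction identity
`(1 + t - 2C²t) - (1 - C²)(1 - t) = C² + 2t - 3C²t` shows that the stated combination of the two
`artanh` terms differentiates to the integrand. The primitive is continuous up to `t = 0`, where
the integrand has a `1/√t` singularity; being a nonnegative derivative, the integrand is then
integrable, and the fundamental theorem of calculus applies.
-/

noncomputable def artanh (x : ℝ) : ℝ := Real.log ((1 + x) / (1 - x)) / 2

open Set

lemma hasDerivAt_artanh {x : ℝ} (h₁ : -1 < x) (h₂ : x < 1) :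
    HasDerivAt artanh (1 / (1 - x ^ 2)) x := by
  have hp : 0 < 1 + x := by linarith
  have hm : 0 < 1 - x := by linarith
  have hq : HasDerivAt (fun y => (1 + y) / (1 - y)) (2 / (1 - x) ^ 2) x := by
    refine (((hasDerivAt_id' x).const_add 1).div ((hasDerivAt_id' x).const_sub 1)
      hm.ne').congr_deriv ?_
    ring
  refine ((hq.log (div_pos hp hm).ne').div_const 2).congr_deriv ?_
  have : 1 - x ^ 2 ≠ 0 := by nlinarith
  field_simp
  ring

section ArtanhSqrtDiv

variable {a q r t : ℝ}

lemma one_sub_mul_div_add_mul (hD : q + r * t ≠ 0) :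
    1 - a * t / (q + r * t) = (q + (r - a) * t) / (q + r * t) := by
  rw [one_sub_div hD]
  ring

lemma sqrt_div_lt_one (hD : 0 < q + r * t) (hE : 0 < q + (r - a) * t) :
    √(a * t / (q + r * t)) < 1 := by
  rw [Real.sqrt_lt' one_pos, one_pow, div_lt_one hD]
  linarith

lemma continuousAt_artanh_sqrt_div (hD : 0 < q + r * t) (hE : 0 < q + (r - a) * t) :
    ContinuousAt (fun s => artanh √(a * s / (q + r * s))) t := by
  have hg : ContinuousAt (fun s => a * s / (q + r * s)) t := by fun_prop (disch := exact hD.ne')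
  refine ContinuousAt.comp (f := fun s => √(a * s / (q + r * s)))
    (hasDerivAt_artanh ?_ (sqrt_div_lt_one hD hE)).continuousAt hg.sqrt
  linarith [Real.sqrt_nonneg (a * t / (q + r * t))]

lemma hasDerivAt_artanh_sqrt_div (ha : 0 < a) (ht : 0 < t) (hD : 0 < q + r * t)
    (hE : 0 < q + (r - a) * t) :
    HasDerivAt (fun s => artanh √(a * s / (q + r * s)))
      (q * √a / (2 * √t * √(q + r * t) * (q + (r - a) * t))) t := by
  have hg : HasDerivAt (fun s => a * s / (q + r * s)) (a * q / (q + r * t) ^ 2) t := by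
    refine (((hasDerivAt_id' t).const_mul a).div (((hasDerivAt_id' t).const_mul r).const_add q)
      hD.ne').congr_deriv ?_
    ring
  have hgpos : 0 < a * t / (q + r * t) := by positivity
  refine ((hasDerivAt_artanh ?_ (sqrt_div_lt_one hD hE)).comp t (hg.sqrt hgpos.ne')).congr_deriv ?_
  · linarith [Real.sqrt_nonneg (a * t / (q + r * t))]
  rw [Real.sq_sqrt hgpos.le, one_sub_mul_div_add_mul hD.ne', Real.sqrt_div' _ hD.le,
    Real.sqrt_mul ha.le]
  field_simp
  rw [Real.sq_sqrt hD.le, Real.sq_sqrt ha.le]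
  ring

end ArtanhSqrtDiv

section HEllipticParabola

variable {C t : ℝ}

noncomputable def parabolaArcPrimitive (C t : ℝ) : ℝ :=
  1 / √(1 - C ^ 2) * artanh √(2 * t * (1 - C ^ 2) / (C ^ 2 + 2 * t - 3 * C ^ 2 * t)) -
    artanh √(2 * t * (1 - C ^ 2) ^ 2 / (C ^ 2 + 2 * t - 3 * C ^ 2 * t))

lemma parabolaArcPrimitive_eq (C : ℝ) :
    parabolaArcPrimitive C = fun t =>
      1 / √(1 - C ^ 2) *
          artanh √(2 * (1 - C ^ 2) * t / (C ^ 2 + (2 - 3 * C ^ 2) * t)) -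
        artanh √(2 * (1 - C ^ 2) ^ 2 * t / (C ^ 2 + (2 - 3 * C ^ 2) * t)) := by
  funext t
  simp only [parabolaArcPrimitive]
  ring_nf

lemma parabolaArcPrimitive_zero (C : ℝ) : parabolaArcPrimitive C 0 = 0 := by
  simp [parabolaArcPrimitive, artanh]

lemma one_add_sub_two_mul_sq_mul_pos (hC0 : 0 < C) (hC1 : C < 1) (ht0 : 0 ≤ t) (ht1 : t < 1) :
    0 < 1 + t - 2 * C ^ 2 * t := by
  have hC2 : C ^ 2 < 1 := by nlinarith
  nlinarith

lemma parabola_factors_pos (hC0 : 0 < C) (hC1 : C < 1) (ht0 : 0 ≤ t) (ht1 : t < 1) :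
    0 < C ^ 2 + (2 - 3 * C ^ 2) * t ∧
      0 < C ^ 2 + (2 - 3 * C ^ 2 - 2 * (1 - C ^ 2)) * t ∧
      0 < C ^ 2 + (2 - 3 * C ^ 2 - 2 * (1 - C ^ 2) ^ 2) * t := by
  have hC2 : C ^ 2 < 1 := by nlinarith
  have hC2p : 0 < C ^ 2 := by positivity
  have hE := one_add_sub_two_mul_sq_mul_pos hC0 hC1 ht0 ht1
  refine ⟨by nlinarith, by nlinarith, by nlinarith⟩

lemma continuousOn_parabolaArcPrimitive (hC0 : 0 < C) (hC1 : C < 1) :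
    ContinuousOn (parabolaArcPrimitive C) (Ico 0 1) := by
  intro t ⟨ht0, ht1⟩
  obtain ⟨hD, hE₁, hE₂⟩ := parabola_factors_pos hC0 hC1 ht0 ht1
  rw [parabolaArcPrimitive_eq]
  exact (((continuousAt_artanh_sqrt_div hD hE₁).const_mul _).sub
    (continuousAt_artanh_sqrt_div hD hE₂)).continuousWithinAt

lemma hasDerivAt_parabolaArcPrimitive (hC0 : 0 < C) (hC1 : C < 1) (ht0 : 0 < t) (ht1 : t < 1) :
    HasDerivAt (parabolaArcPrimitive C)
      (√(C ^ 2 + 2 * t - 3 * C ^ 2 * t) /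
        ((1 - t) * (1 + t - 2 * C ^ 2 * t) * √(2 * t))) t := by
  obtain ⟨hD, hE₁, hE₂⟩ := parabola_factors_pos hC0 hC1 ht0.le ht1
  have ha : 0 < 1 - C ^ 2 := by nlinarith
  rw [parabolaArcPrimitive_eq]
  refine (((hasDerivAt_artanh_sqrt_div (by positivity) ht0 hD hE₁).const_mul _).sub
    (hasDerivAt_artanh_sqrt_div (by positivity) ht0 hD hE₂)).congr_deriv ?_
  have hE₁_eq : C ^ 2 + (2 - 3 * C ^ 2 - 2 * (1 - C ^ 2)) * t = C ^ 2 * (1 - t) := by ring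
  have hE₂_eq : C ^ 2 + (2 - 3 * C ^ 2 - 2 * (1 - C ^ 2) ^ 2) * t =
      C ^ 2 * (1 + t - 2 * C ^ 2 * t) := by ring
  have hD_eq : C ^ 2 + (2 - 3 * C ^ 2) * t = C ^ 2 + 2 * t - 3 * C ^ 2 * t := by ring
  have h1t : 0 < 1 - t := by linarith
  have hE := one_add_sub_two_mul_sq_mul_pos hC0 hC1 ht0.le ht1
  rw [hE₁_eq, hE₂_eq, hD_eq, Real.sqrt_mul zero_le_two, Real.sqrt_mul zero_le_two,
    Real.sqrt_mul zero_le_two, Real.sqrt_sq ha.le]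
  have hD' : 0 < C ^ 2 + 2 * t - 3 * C ^ 2 * t := hD_eq ▸ hD
  field_simp
  rw [Real.sq_sqrt zero_le_two]
  field_simp
  rw [div_eq_iff (Real.sqrt_pos.2 (by linarith)).ne', Real.mul_self_sqrt (by linarith)]
  ring

lemma parabola_integrand_nonneg (hC0 : 0 < C) (hC1 : C < 1) (ht0 : 0 ≤ t) (ht1 : t < 1) :
    0 ≤ √(C ^ 2 + 2 * t - 3 * C ^ 2 * t) / ((1 - t) * (1 + t - 2 * C ^ 2 * t) * √(2 * t)) := by
  have h1t : 0 < 1 - t := by linarith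
  have hE := one_add_sub_two_mul_sq_mul_pos hC0 hC1 ht0 ht1
  positivity

end HEllipticParabola

theorem arclength_truncated_h_elliptic_parabola (C η : ℝ) (hC0 : 0 < C) (hC1 : C < 1)
    (hη0 : 0 < η) (hη1 : η < 1) :
    2 * (∫ t in (0:ℝ)..η,
        Real.sqrt (C ^ 2 + 2 * t - 3 * C ^ 2 * t) /
          ((1 - t) * (1 + t - 2 * C ^ 2 * t) * Real.sqrt (2 * t))) =
      2 * ((1 / Real.sqrt (1 - C ^ 2)) *
          artanh (Real.sqrt (2 * η * (1 - C ^ 2) / (C ^ 2 + 2 * η - 3 * C ^ 2 * η))) -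
        artanh (Real.sqrt (2 * η * (1 - C ^ 2) ^ 2 / (C ^ 2 + 2 * η - 3 * C ^ 2 * η)))) := by
  have hcont : ContinuousOn (parabolaArcPrimitive C) (Icc 0 η) :=
    (continuousOn_parabolaArcPrimitive hC0 hC1).mono (Icc_subset_Ico_right hη1)
  have hderiv : ∀ t ∈ Ioo 0 η, HasDerivAt (parabolaArcPrimitive C)
      (√(C ^ 2 + 2 * t - 3 * C ^ 2 * t) / ((1 - t) * (1 + t - 2 * C ^ 2 * t) * √(2 * t))) t :=
    fun t ht => hasDerivAt_parabolaArcPrimitive hC0 hC1 ht.1 (ht.2.trans hη1)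
  have hint := (intervalIntegrable_iff_integrableOn_Ioc_of_le hη0.le).2
    (intervalIntegral.integrableOn_deriv_of_nonneg hcont hderiv fun t ht =>
      parabola_integrand_nonneg hC0 hC1 ht.1.le (ht.2.trans hη1))
  rw [intervalIntegral.integral_eq_sub_of_hasDerivAt_of_le hη0.le hcont hderiv hint,
    parabolaArcPrimitive_zero, sub_zero, parabolaArcPrimitive]
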